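/- Let I be an n×n black-white image. Then every pixel of 𝔅(I) — the union of the outer boundaries B(S) over all shapes S of I other than the outer shape S⁰ — is either a boundary pixel of I or a neighbor of a boundary pixel of I. Consequently |𝔅(I)| ≤ 5·|boundary(I)|; in particular, if I has a c-sparse boundary then |𝔅(I)| ≤ 5cn. -/

import Mathlib

/-- A basic move on an `n×n` image: swap two adjacent rows or two adjacent columns. -/
def ImgMove {n : ℕ} {α : Type} (I I' : Fin n → Fin n → α) : Prop :=
  ∃ (x : Fin n) (h : x.val + 1 < n),
    I' = (fun i j => I (Equiv.swap x ⟨x.val + 1, h⟩ i) j) ∨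
    I' = (fun i j => I i (Equiv.swap x ⟨x.val + 1, h⟩ j))

/-- `MovesN R m a b`: `b` is obtained from `a` by exactly `m` `R`-steps. -/
def MovesN {β : Type} (R : β → β → Prop) : ℕ → β → β → Prop
  | 0 => fun a b => a = b
  | m + 1 => fun a c => ∃ b, R a b ∧ MovesN R m b c

/-- Normalized Hamming distance between two `n×n` images. -/
noncomputable def dHamImg {n : ℕ} {α : Type} (I I' : Fin n → Fin n → α) : ℝ :=
  (Nat.card {p : Fin n × Fin n // I p.1 p.2 ≠ I' p.1 p.2} : ℝ) / (n ^ 2)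

/-- Two pixels are neighbors if they agree in one coordinate and differ by exactly `1`
in the other. -/
def Nbr {n : ℕ} (P Q : Fin n × Fin n) : Prop :=
  (P.1 = Q.1 ∧ (P.2.val + 1 = Q.2.val ∨ Q.2.val + 1 = P.2.val)) ∨
  (P.2 = Q.2 ∧ (P.1.val + 1 = Q.1.val ∨ Q.1.val + 1 = P.1.val))

/-- The boundary of a black-white image (`true` = black, `false` = white): the set of
black pixels having a white neighbor. -/
def boundary {n : ℕ} (I : Fin n → Fin n → Bool) : Set (Fin n × Fin n) :=
  {P | I P.1 P.2 = true ∧ ∃ Q, Nbr P Q ∧ I Q.1 Q.2 = false}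


/-- `l` is a path from `P` to `Q`: a nonempty list of pixels starting at `P`, ending at `Q`,
in which consecutive pixels are neighbors. -/
def IsPath {n : ℕ} (l : List (Fin n × Fin n)) (P Q : Fin n × Fin n) : Prop :=
  l ≠ [] ∧ l.head? = some P ∧ l.getLast? = some Q ∧ l.Chain' Nbr

/-- The shape of the image `I` containing the pixel `P`: the connected component of `P`
among pixels of the same color, i.e. all pixels reachable from `P` by a monochromatic path. -/
def shapeOf {n : ℕ} (I : Fin n → Fin n → Bool) (P : Fin n × Fin n) :
    Set (Fin n × Fin n) :=
  {Q | ∃ l : List (Fin n × Fin n), IsPath l P Q ∧ ∀ R ∈ l, I R.1 R.2 = I P.1 P.2}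

/-- The outer pixel `(1,1)` (zero-based `(0,0)`). -/
def origin {n : ℕ} (hn : 0 < n) : Fin n × Fin n := (⟨0, hn⟩, ⟨0, hn⟩)

/-- The outer boundary `B(S)` of a set `S` of pixels: those `Q ∈ S` admitting a path from
the outer pixel to `Q` that does not intersect `S ∖ {Q}`. -/
def outerBdry {n : ℕ} (hn : 0 < n) (S : Set (Fin n × Fin n)) : Set (Fin n × Fin n) :=
  {Q | Q ∈ S ∧ ∃ l : List (Fin n × Fin n), IsPath l (origin hn) Q ∧ ∀ R ∈ l, R ∈ S → R = Q}


/-- `𝔅(I)`: the union of the outer boundaries `B(S)` over all shapes `S` of `I` other than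
the outer shape `S⁰` (the shape of the pixel `(1,1)`). -/
def bigB {n : ℕ} (hn : 0 < n) (I : Fin n → Fin n → Bool) : Set (Fin n × Fin n) :=
  {Q | ∃ P : Fin n × Fin n, shapeOf I P ≠ shapeOf I (origin hn) ∧
    Q ∈ outerBdry hn (shapeOf I P)}

section Helpers

variable {n : ℕ}

lemma nbr_symm {P Q : Fin n × Fin n} (h : Nbr P Q) : Nbr Q P := by
  unfold Nbr at *; tauto

lemma nbr_ne {P Q : Fin n × Fin n} (h : Nbr P Q) : P ≠ Q := by
  rintro rfl
  rcases h with ⟨_, h | h⟩ | ⟨_, h | h⟩ <;> omega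

lemma shape_color {I : Fin n → Fin n → Bool} {P Q : Fin n × Fin n}
    (h : Q ∈ shapeOf I P) : I Q.1 Q.2 = I P.1 P.2 := by
  obtain ⟨l, ⟨_, _, hlast, _⟩, hc⟩ := h
  exact hc Q (List.mem_of_getLast? hlast)

lemma shape_trans {I : Fin n → Fin n → Bool} {P Q R : Fin n × Fin n}
    (h1 : Q ∈ shapeOf I P) (h2 : R ∈ shapeOf I Q) : R ∈ shapeOf I P := by
  have hQP : I Q.1 Q.2 = I P.1 P.2 := shape_color h1
  obtain ⟨l1, ⟨hne1, hhd1, hlast1, hch1⟩, hc1⟩ := h1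
  obtain ⟨l2, ⟨hne2, hhd2, hlast2, hch2⟩, hc2⟩ := h2
  obtain ⟨t, rfl⟩ : ∃ t, l2 = Q :: t := by
    obtain ⟨b, t, rfl⟩ := List.exists_cons_of_ne_nil hne2
    have hb : b = Q := by simpa using hhd2
    exact ⟨t, by rw [hb]⟩
  rcases t with _ | ⟨c, t⟩
  · have : Q = R := by simpa using hlast2
    subst this
    exact ⟨l1, ⟨hne1, hhd1, hlast1, hch1⟩, hc1⟩
  · refine ⟨l1 ++ (c :: t), ⟨by simp [hne1], ?_, ?_, ?_⟩, ?_⟩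
    · rw [List.head?_append]
      rcases l1 with _ | ⟨a, s⟩
      · exact absurd rfl hne1
      · simpa using hhd1
    · rw [List.getLast?_append]
      have : (c :: t).getLast? = some R := by
        rw [← hlast2, List.getLast?_cons_cons]
      simp [this]
    · unfold List.Chain' at *
      rw [List.isChain_append]
      refine ⟨hch1, hch2.tail, ?_⟩
      intro x hx y hy
      obtain rfl : Q = x := by rw [hlast1] at hx; simpa using hx
      obtain rfl : c = y := by simpa using hy
      exact List.isChain_cons_cons.mp hch2 |>.1
    · intro S hS
      rcases List.mem_append.mp hS with h | h
      · exact hc1 S h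
      · rw [hc2 S (List.mem_cons_of_mem _ h), hQP]

lemma shape_symm {I : Fin n → Fin n → Bool} {P Q : Fin n × Fin n}
    (h : Q ∈ shapeOf I P) : P ∈ shapeOf I Q := by
  have hQP : I Q.1 Q.2 = I P.1 P.2 := shape_color h
  obtain ⟨l, ⟨hne, hhd, hlast, hch⟩, hc⟩ := h
  refine ⟨l.reverse, ⟨by simpa using hne, by simpa [List.head?_reverse],
    by simpa [List.getLast?_reverse], ?_⟩, ?_⟩
  · unfold List.Chain' at *
    rw [List.isChain_reverse]
    exact hch.imp fun _ _ h => nbr_symm h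
  · intro S hS
    rw [hc S (by simpa using hS), ← hQP]

lemma shape_eq {I : Fin n → Fin n → Bool} {P Q : Fin n × Fin n}
    (h : Q ∈ shapeOf I P) : shapeOf I P = shapeOf I Q := by
  ext R
  exact ⟨fun hR => shape_trans (shape_symm h) hR, fun hR => shape_trans h hR⟩

lemma shape_step {I : Fin n → Fin n → Bool} {Q R : Fin n × Fin n}
    (hnbr : Nbr Q R) (hcol : I R.1 R.2 = I Q.1 Q.2) : R ∈ shapeOf I Q := by
  refine ⟨[Q, R], ⟨by simp, by simp, by simp, List.isChain_pair.mpr hnbr⟩, ?_⟩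
  intro S hS
  simp only [List.mem_cons, List.mem_singleton] at hS
  rcases hS with rfl | rfl | h
  · rfl
  · exact hcol
  · simp at h

lemma fin_sub_one_val [NeZero n] (a : Fin n) (h : 1 ≤ a.val) :
    (a - 1).val = a.val - 1 := by
  have hn2 : 2 ≤ n := by omega
  rw [Fin.sub_def]
  simp only [Fin.val_one']
  rw [Nat.mod_eq_of_lt (show 1 < n by omega)]
  have h1 : (n - 1) + a.val = (a.val - 1) + n := by omega
  rw [h1, Nat.add_mod_right]
  exact Nat.mod_eq_of_lt (by omega)

lemma fin_add_one_val [NeZero n] (a : Fin n) (h : a.val + 1 < n) :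
    (a + 1).val = a.val + 1 := by
  rw [Fin.add_def]
  simp only [Fin.val_one']
  rw [Nat.mod_eq_of_lt (show 1 < n by omega)]
  exact Nat.mod_eq_of_lt h

end Helpers

/-- Every pixel of `𝔅(I)` is a boundary pixel of `I` or a neighbor of one; consequently
`|𝔅(I)| ≤ 5·|boundary(I)|`, and if `I` has a `c`-sparse boundary then `|𝔅(I)| ≤ 5cn`. -/
theorem stmt12 {n : ℕ} (hn : 0 < n) (I : Fin n → Fin n → Bool) :
    (∀ Q ∈ bigB hn I, Q ∈ boundary I ∨ ∃ R ∈ boundary I, Nbr Q R) ∧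
    (bigB hn I).ncard ≤ 5 * (boundary I).ncard ∧
    (∀ c : ℝ, ((boundary I).ncard : ℝ) ≤ c * n → ((bigB hn I).ncard : ℝ) ≤ 5 * c * n) := by
  haveI : NeZero n := ⟨hn.ne'⟩
  have main : ∀ Q ∈ bigB hn I, Q ∈ boundary I ∨ ∃ R ∈ boundary I, Nbr Q R := by
    intro Q hQ
    obtain ⟨P, hne, hQS, l, ⟨hlne, hhd, hlast, hch⟩, havoid⟩ := hQ
    have hSQ : shapeOf I P = shapeOf I Q := shape_eq hQS
    have hQorig : Q ≠ origin hn := by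
      rintro rfl
      exact hne hSQ
    have hrevne : l.reverse ≠ [] := by simpa
    obtain ⟨b, t, hrev⟩ := List.exists_cons_of_ne_nil hrevne
    have hbQ : b = Q := by
      have h1 : l.reverse.head? = some Q := by rw [List.head?_reverse, hlast]
      rw [hrev] at h1; simpa using h1
    subst hbQ
    rcases t with _ | ⟨R, t⟩
    · have hlQ : l = [b] := by
        have := congrArg List.reverse hrev
        simpa using this
      rw [hlQ] at hhd
      simp at hhd
      exact absurd hhd hQorig
    · have hchrev : List.Chain' Nbr l.reverse := by
        unfold List.Chain' at *
        rw [List.isChain_reverse]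
        exact hch.imp fun _ _ h => nbr_symm h
      rw [hrev] at hchrev
      have hQR : Nbr b R := (List.isChain_cons_cons.mp hchrev).1
      have hRmem : R ∈ l := by
        rw [← List.mem_reverse, hrev]; simp
      have hRnotS : R ∉ shapeOf I P := fun hRS =>
        nbr_ne hQR (havoid R hRmem hRS).symm
      have hcolne : I R.1 R.2 ≠ I b.1 b.2 := fun hcol =>
        hRnotS (hSQ ▸ shape_step hQR hcol)
      cases hIQ : I b.1 b.2 with
      | true =>
        left
        refine ⟨hIQ, R, hQR, ?_⟩
        rw [hIQ] at hcolne
        simpa using hcolne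
      | false =>
        right
        refine ⟨R, ⟨?_, b, nbr_symm hQR, hIQ⟩, hQR⟩
        rw [hIQ] at hcolne
        simpa using hcolne
  set B := boundary I with hB
  set f1 : (Fin n × Fin n) → (Fin n × Fin n) := fun R => (R.1, R.2 + 1) with hf1
  set f2 : (Fin n × Fin n) → (Fin n × Fin n) := fun R => (R.1, R.2 - 1) with hf2
  set f3 : (Fin n × Fin n) → (Fin n × Fin n) := fun R => (R.1 + 1, R.2) with hf3
  set f4 : (Fin n × Fin n) → (Fin n × Fin n) := fun R => (R.1 - 1, R.2) with hf4
  have hsub : bigB hn I ⊆ B ∪ (f1 '' B ∪ (f2 '' B ∪ (f3 '' B ∪ f4 '' B))) := by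
    intro Q hQ
    rcases main Q hQ with h | ⟨R, hR, hnbr⟩
    · exact Or.inl h
    · rcases hnbr with ⟨h1, h2 | h2⟩ | ⟨h1, h2 | h2⟩
      · -- Q.1 = R.1, Q.2.val + 1 = R.2.val : Q = f2 R
        refine Or.inr (Or.inr (Or.inl ⟨R, hR, ?_⟩))
        have : (R.2 - 1).val = Q.2.val := by
          rw [fin_sub_one_val R.2 (by omega)]; omega
        exact Prod.ext h1.symm (Fin.ext this)
      · -- R.2.val + 1 = Q.2.val : Q = f1 R
        refine Or.inr (Or.inl ⟨R, hR, ?_⟩)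
        have : (R.2 + 1).val = Q.2.val := by
          rw [fin_add_one_val R.2 (by omega)]; omega
        exact Prod.ext h1.symm (Fin.ext this)
      · -- Q.2 = R.2, Q.1.val + 1 = R.1.val : Q = f4 R
        refine Or.inr (Or.inr (Or.inr (Or.inr ⟨R, hR, ?_⟩)))
        have : (R.1 - 1).val = Q.1.val := by
          rw [fin_sub_one_val R.1 (by omega)]; omega
        exact Prod.ext (Fin.ext this) h1.symm
      · -- R.1.val + 1 = Q.1.val : Q = f3 R
        refine Or.inr (Or.inr (Or.inr (Or.inl ⟨R, hR, ?_⟩)))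
        have : (R.1 + 1).val = Q.1.val := by
          rw [fin_add_one_val R.1 (by omega)]; omega
        exact Prod.ext (Fin.ext this) h1.symm
  have hcard : (bigB hn I).ncard ≤ 5 * B.ncard := by
    have hA : (bigB hn I).ncard ≤ (B ∪ (f1 '' B ∪ (f2 '' B ∪ (f3 '' B ∪ f4 '' B)))).ncard :=
      Set.ncard_le_ncard hsub (Set.toFinite _)
    have u1 := Set.ncard_union_le B (f1 '' B ∪ (f2 '' B ∪ (f3 '' B ∪ f4 '' B)))
    have u2 := Set.ncard_union_le (f1 '' B) (f2 '' B ∪ (f3 '' B ∪ f4 '' B))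
    have u3 := Set.ncard_union_le (f2 '' B) (f3 '' B ∪ f4 '' B)
    have u4 := Set.ncard_union_le (f3 '' B) (f4 '' B)
    have k1 : (f1 '' B).ncard ≤ B.ncard := Set.ncard_image_le (Set.toFinite _)
    have k2 : (f2 '' B).ncard ≤ B.ncard := Set.ncard_image_le (Set.toFinite _)
    have k3 : (f3 '' B).ncard ≤ B.ncard := Set.ncard_image_le (Set.toFinite _)
    have k4 : (f4 '' B).ncard ≤ B.ncard := Set.ncard_image_le (Set.toFinite _)
    omega
  refine ⟨main, hcard, ?_⟩
  intro c hc
  have h1 : ((bigB hn I).ncard : ℝ) ≤ 5 * (B.ncard : ℝ) := by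
    exact_mod_cast hcard
  calc ((bigB hn I).ncard : ℝ) ≤ 5 * (B.ncard : ℝ) := h1
    _ ≤ 5 * (c * n) := by linarith
    _ = 5 * c * n := by ring
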